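/- arXiv:0806.1179 — 2 statements merged into one kernel-verified Lean document; each statement's English description precedes it below -/
import Mathlib

section
/- In the category LRF of labeled rooted forests, for a forest F and admissible cut C, the sequence ∅ → P_C(F) → F → R_C(F) → ∅ (with maps (C_null, C, id) and (C, C_full, id)) is a short exact sequence, and every short exact sequence ∅ → A → F → B → ∅ in LRF is obtained from one of this form by composing with isomorphisms A ≅ P_C(F) and R_C(F) ≅ B. -/
attribute [local instance] Classical.propDecidable

noncomputable section

/-- A labeled rooted forest: a finite set of vertex labels together with a
parent function (`none` = root), acyclic via a depth function. -/
structure Forest where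
  verts : Finset ℕ
  parent : ℕ → Option ℕ
  parent_mem : ∀ v ∈ verts, ∀ p, parent v = some p → p ∈ verts
  wf : ∃ d : ℕ → ℕ, ∀ v ∈ verts, ∀ p, parent v = some p → d p < d v

namespace Forest

/-- `S` is the vertex set of a subforest of `F` (the branches `P_C(F)` severed by an
admissible cut `C`): a subset of the vertices closed under passing to children. -/
def IsSub (F : Forest) (S : Finset ℕ) : Prop :=
  S ⊆ F.verts ∧ ∀ v ∈ S, ∀ w ∈ F.verts, F.parent w = some v → w ∈ S

/-- The subforest `P_C(F)` determined by the (descendant-closed) vertex set `S`. -/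
def restrict (F : Forest) (S : Finset ℕ) : Forest where
  verts := S ∩ F.verts
  parent v := (F.parent v).bind fun p =>
    if v ∈ S ∩ F.verts ∧ p ∈ S ∩ F.verts then some p else none
  parent_mem := by
    intro v hv p hp
    beta_reduce at hp
    cases h : F.parent v with
    | none => rw [h] at hp; simp at hp
    | some q =>
      rw [h] at hp
      simp only [Option.bind_some] at hp
      split at hp
      · rename_i hc; cases hp; exact hc.2
      · simp at hp
  wf := by
    obtain ⟨d, hd⟩ := F.wf
    refine ⟨d, ?_⟩
    intro v hv p hp
    beta_reduce at hp
    cases h : F.parent v with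
    | none => rw [h] at hp; simp at hp
    | some q =>
      rw [h] at hp
      simp only [Option.bind_some] at hp
      split at hp
      · rename_i hc; cases hp
        exact hd v (Finset.mem_inter.mp hv).2 _ h
      · simp at hp

/-- The root part `R_C(F) = F/P_C(F)` determined by the severed vertex set `S`. -/
def quot (F : Forest) (S : Finset ℕ) : Forest where
  verts := F.verts \ S
  parent v := (F.parent v).bind fun p =>
    if v ∈ F.verts \ S ∧ p ∈ F.verts \ S then some p else none
  parent_mem := by
    intro v hv p hp
    beta_reduce at hp
    cases h : F.parent v with
    | none => rw [h] at hp; simp at hp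
    | some q =>
      rw [h] at hp
      simp only [Option.bind_some] at hp
      split at hp
      · rename_i hc; cases hp; exact hc.2
      · simp at hp
  wf := by
    obtain ⟨d, hd⟩ := F.wf
    refine ⟨d, ?_⟩
    intro v hv p hp
    beta_reduce at hp
    cases h : F.parent v with
    | none => rw [h] at hp; simp at hp
    | some q =>
      rw [h] at hp
      simp only [Option.bind_some] at hp
      split at hp
      · rename_i hc; cases hp
        exact hd v (Finset.mem_sdiff.mp hv).1 _ h
      · simp at hp

/-- `φ` realizes an isomorphism of labeled rooted forests (a root- and
incidence-preserving bijection on labels). -/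
def IsoMap (F G : Forest) (φ : ℕ → ℕ) : Prop :=
  Set.BijOn φ (F.verts : Set ℕ) (G.verts : Set ℕ) ∧
    ∀ v ∈ F.verts, (F.parent v).map φ = G.parent (φ v)

/-- Isomorphism of labeled rooted forests. -/
def Iso (F G : Forest) : Prop := ∃ φ, IsoMap F G φ

/-- A function on forests which only depends on the isomorphism class. -/
def Invariant (f : Forest → ℚ) : Prop := ∀ F G, Iso F G → f F = f G

/-- A function on forests supported on finitely many isomorphism classes. -/
def FinSupp (f : Forest → ℚ) : Prop :=
  ∃ s : Finset Forest, ∀ F, f F ≠ 0 → ∃ G ∈ s, Iso F G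

/-- The Ringel-Hall convolution product:
`(f × g)(F) = ∑_{G ⊆ F} f(G) · g(F/G)`, the sum running over subforests of `F`. -/
def conv (f g : Forest → ℚ) : Forest → ℚ := fun F =>
  ∑ S ∈ F.verts.powerset, if F.IsSub S then f (F.restrict S) * g (F.quot S) else 0

end Forest

end

namespace Forest

/-- A (raw) morphism datum in the category `LRF`: a triple `(C₁, C₂, f)`. -/
structure Mor where
  cut1 : Finset ℕ
  cut2 : Finset ℕ
  map : ℕ → ℕ

/-- `(C₁, C₂, f)` is a morphism `F → G` in `LRF`: `C₁` is an admissible cut of `F`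
(recorded by the severed vertex set), `C₂` one of `G`, and `f` an isomorphism
`R_{C₁}(F) ≅ P_{C₂}(G)`. -/
def IsMor (F G : Forest) (m : Mor) : Prop :=
  F.IsSub m.cut1 ∧ G.IsSub m.cut2 ∧
    IsoMap (F.quot m.cut1) (G.restrict m.cut2) m.map

/-- Composition of morphisms in `LRF` (`m : F → F₂` followed by `n : F₂ → F₃`):
the cut of `n` is pulled back through `m` to a cut `E₁ ≥ C₁` of `F`, and the new
image is the image of `R_{E₁}(F)` under the composite map. -/
noncomputable def Mor.comp (F : Forest) (m n : Mor) : Mor :=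
  ⟨m.cut1 ∪ ((F.quot m.cut1).verts.filter fun v => m.map v ∈ n.cut1),
   ((F.quot (m.cut1 ∪ ((F.quot m.cut1).verts.filter fun v => m.map v ∈ n.cut1))).verts).image
     (n.map ∘ m.map),
   n.map ∘ m.map⟩

/-- The identity morphism `(C_null, C_full, id)` of `F`. -/
def idMor (F : Forest) : Mor := ⟨∅, F.verts, id⟩

/-- Equality of morphisms out of `F` (the map only matters on `R_{C₁}(F)`). -/
def MorEq (F : Forest) (m n : Mor) : Prop :=
  m.cut1 = n.cut1 ∧ m.cut2 = n.cut2 ∧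
    ∀ v ∈ (F.quot m.cut1).verts, m.map v = n.map v

/-- The zero morphisms `F → G`: morphisms with empty image (factoring through `∅`). -/
def IsZeroMor (F G : Forest) (m : Mor) : Prop := IsMor F G m ∧ m.cut2 = ∅

end Forest

namespace Forest

/-- `i : A → L` is a kernel of `p : L → B` in `LRF`. -/
def IsKernelOf (A L B : Forest) (i p : Mor) : Prop :=
  IsZeroMor A B (Mor.comp A i p) ∧
    ∀ (A' : Forest) (u : Mor), IsMor A' L u → IsZeroMor A' B (Mor.comp A' u p) →
      ∃ w : Mor, IsMor A' A w ∧ MorEq A' (Mor.comp A' w i) u ∧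
        ∀ w' : Mor, IsMor A' A w' → MorEq A' (Mor.comp A' w' i) u → MorEq A' w w'

/-- `p : L → B` is a cokernel of `i : A → L` in `LRF`. -/
def IsCokernelOf (A L B : Forest) (i p : Mor) : Prop :=
  IsZeroMor A B (Mor.comp A i p) ∧
    ∀ (B' : Forest) (u : Mor), IsMor L B' u → IsZeroMor A B' (Mor.comp A i u) →
      ∃ w : Mor, IsMor B B' w ∧ MorEq L (Mor.comp L p w) u ∧
        ∀ w' : Mor, IsMor B B' w' → MorEq L (Mor.comp L p w') u → MorEq B w w'

/-- `∅ → A → L → B → ∅` is a short exact sequence in `LRF`. -/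
def IsShortExact (A L B : Forest) (i p : Mor) : Prop :=
  IsMor A L i ∧ IsMor L B p ∧ IsKernelOf A L B i p ∧ IsCokernelOf A L B i p

end Forest

/-! A morphism `F → G` of `LRF` is determined by the cut it makes in `F` and by its map on the
root part, its image cut being the image of that map. For the canonical sequence the
factorizations are explicit: a morphism killed by the projection already lands in `P_S(F)`,
and one killing `P_S(F)` cuts at least `S`, so it descends to `R_S(F)`. Conversely, in a short
exact sequence `∅ → A → F → B → ∅` the kernel is monic, hence cuts nothing of `A`, and the
cokernel is epic, hence hits all of `B`; factoring the inclusion of the part severed by `p`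
through the kernel, together with the vanishing of the composite, identifies the cut of `p`
with the image of the kernel. -/

namespace Forest

@[simp]
lemma mem_restrict_verts {F : Forest} {S : Finset ℕ} {v : ℕ} :
    v ∈ (F.restrict S).verts ↔ v ∈ S ∧ v ∈ F.verts :=
  Finset.mem_inter

@[simp]
lemma mem_quot_verts {F : Forest} {S : Finset ℕ} {v : ℕ} :
    v ∈ (F.quot S).verts ↔ v ∈ F.verts ∧ v ∉ S :=
  Finset.mem_sdiff

lemma restrict_parent_eq_some {F : Forest} {S : Finset ℕ} {v p : ℕ} :
    (F.restrict S).parent v = some p ↔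
      F.parent v = some p ∧ v ∈ (F.restrict S).verts ∧ p ∈ (F.restrict S).verts := by
  change (F.parent v).bind _ = _ ↔ _
  cases F.parent v with
  | none => simp
  | some q =>
    rw [Option.bind_some]
    split_ifs with h
    · exact ⟨fun e => by cases e; exact ⟨rfl, h⟩, And.left⟩
    · exact ⟨fun e => (nomatch e), fun ⟨e, h'⟩ => h (by cases e; exact h')⟩

lemma quot_parent_eq_some {F : Forest} {S : Finset ℕ} {v p : ℕ} :
    (F.quot S).parent v = some p ↔
      F.parent v = some p ∧ v ∈ (F.quot S).verts ∧ p ∈ (F.quot S).verts := by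
  change (F.parent v).bind _ = _ ↔ _
  cases F.parent v with
  | none => simp
  | some q =>
    rw [Option.bind_some]
    split_ifs with h
    · exact ⟨fun e => by cases e; exact ⟨rfl, h⟩, And.left⟩
    · exact ⟨fun e => (nomatch e), fun ⟨e, h'⟩ => h (by cases e; exact h')⟩

lemma IsSub.restrict {F : Forest} {S T : Finset ℕ} (hT : F.IsSub T) (hTS : T ⊆ S) :
    (F.restrict S).IsSub T := by
  refine ⟨fun v hv => mem_restrict_verts.2 ⟨hTS hv, hT.1 hv⟩, fun v hv w _ hw => ?_⟩
  obtain ⟨hw, hw', -⟩ := restrict_parent_eq_some.1 hw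
  exact hT.2 v hv w (mem_restrict_verts.1 hw').2 hw

lemma IsSub.quot {F : Forest} {S T : Finset ℕ} (hT : F.IsSub T) :
    (F.quot S).IsSub (T \ S) := by
  refine ⟨fun v hv => ?_, fun v hv w _ hw => ?_⟩
  · obtain ⟨hvT, hvS⟩ := Finset.mem_sdiff.1 hv
    exact mem_quot_verts.2 ⟨hT.1 hvT, hvS⟩
  · obtain ⟨hw, hw', -⟩ := quot_parent_eq_some.1 hw
    obtain ⟨hwF, hwS⟩ := mem_quot_verts.1 hw'
    exact Finset.mem_sdiff.2 ⟨hT.2 v (Finset.mem_sdiff.1 hv).1 w hwF hw, hwS⟩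

lemma isSub_empty (F : Forest) : F.IsSub ∅ := ⟨Finset.empty_subset _, by simp⟩

lemma isSub_verts (F : Forest) : F.IsSub F.verts := ⟨subset_rfl, fun _ _ _ hw _ => hw⟩

lemma IsoMap.image_verts {F G : Forest} {f : ℕ → ℕ} (h : IsoMap F G f) :
    F.verts.image f = G.verts := by
  rw [← Finset.coe_inj, Finset.coe_image, h.1.image_eq]

lemma IsoMap.comp {F G H : Forest} {f g : ℕ → ℕ} (hf : IsoMap F G f) (hg : IsoMap G H g) :
    IsoMap F H (g ∘ f) :=
  ⟨hg.1.comp hf.1, fun v hv => by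
    rw [← Option.map_comp_map, Function.comp_apply, hf.2 v hv, hg.2 _ (hf.1.mapsTo hv)]
    rfl⟩

lemma isoMap_id_iff {F G : Forest} :
    IsoMap F G id ↔ F.verts = G.verts ∧ ∀ v ∈ F.verts, F.parent v = G.parent v := by
  refine ⟨fun h => ⟨by simpa using h.image_verts, fun v hv => by simpa using h.2 v hv⟩,
    fun ⟨hv, hp⟩ => ⟨?_, fun v h => by simpa using hp v h⟩⟩
  rw [hv]
  exact Set.bijOn_id _

lemma IsoMap.id_symm {F G : Forest} (h : IsoMap F G id) : IsoMap G F id := by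
  obtain ⟨hv, hp⟩ := isoMap_id_iff.1 h
  exact isoMap_id_iff.2 ⟨hv.symm, fun v h => (hp v (hv ▸ h)).symm⟩

lemma isoMap_of_verts_eq_empty {F G : Forest} (f : ℕ → ℕ) (hF : F.verts = ∅)
    (hG : G.verts = ∅) : IsoMap F G f :=
  ⟨by simp [hF, hG], by simp [hF]⟩

lemma isoMap_quot_empty (F : Forest) : IsoMap F (F.quot ∅) id := by
  refine isoMap_id_iff.2 ⟨by simp [Forest.quot], fun v hv => Option.ext fun p => ?_⟩
  rw [quot_parent_eq_some]
  exact ⟨fun h => ⟨h, by simpa using hv, by simpa using F.parent_mem v hv p h⟩, And.left⟩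

lemma isoMap_restrict_verts (F : Forest) : IsoMap F (F.restrict F.verts) id := by
  refine isoMap_id_iff.2 ⟨by simp [Forest.restrict], fun v hv => Option.ext fun p => ?_⟩
  rw [restrict_parent_eq_some]
  exact ⟨fun h => ⟨h, by simpa using hv, by simpa using F.parent_mem v hv p h⟩, And.left⟩

lemma isoMap_restrict_restrict (F : Forest) {S T : Finset ℕ} (h : T ⊆ S) :
    IsoMap (F.restrict T) ((F.restrict S).restrict T) id := by
  refine isoMap_id_iff.2 ⟨?_, fun v _ => Option.ext fun p => ?_⟩
  · ext v
    simp only [mem_restrict_verts]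
    exact ⟨fun ⟨hT, hF⟩ => ⟨hT, h hT, hF⟩, fun ⟨hT, _, hF⟩ => ⟨hT, hF⟩⟩
  · simp only [restrict_parent_eq_some, mem_restrict_verts]
    constructor
    · rintro ⟨hp, ⟨hvT, hvF⟩, hpT, hpF⟩
      exact ⟨⟨hp, ⟨h hvT, hvF⟩, h hpT, hpF⟩, ⟨hvT, h hvT, hvF⟩, hpT, h hpT, hpF⟩
    · rintro ⟨⟨hp, -⟩, ⟨hvT, -, hvF⟩, hpT, -, hpF⟩
      exact ⟨hp, ⟨hvT, hvF⟩, hpT, hpF⟩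

lemma isoMap_quot_quot (F : Forest) {S T : Finset ℕ} (h : S ⊆ T) :
    IsoMap ((F.quot S).quot (T \ S)) (F.quot T) id := by
  have hmem : ∀ v, v ∈ ((F.quot S).quot (T \ S)).verts ↔ v ∈ (F.quot T).verts := by
    intro v
    simp only [mem_quot_verts, Finset.mem_sdiff]
    exact ⟨fun ⟨⟨hF, hS⟩, hTS⟩ => ⟨hF, fun hT => hTS ⟨hT, hS⟩⟩,
      fun ⟨hF, hT⟩ => ⟨⟨hF, fun hS => hT (h hS)⟩, fun hTS => hT hTS.1⟩⟩
  have hsub : (F.quot T).verts ⊆ (F.quot S).verts := Finset.sdiff_subset_sdiff subset_rfl h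
  refine isoMap_id_iff.2 ⟨Finset.ext hmem, fun v _ => Option.ext fun p => ?_⟩
  rw [quot_parent_eq_some, quot_parent_eq_some, hmem, hmem, quot_parent_eq_some]
  exact ⟨fun ⟨⟨hp, _⟩, hv, hp'⟩ => ⟨hp, hv, hp'⟩,
    fun ⟨hp, hv, hp'⟩ => ⟨⟨hp, hsub hv, hsub hp'⟩, hv, hp'⟩⟩

def Mor.incl (S : Finset ℕ) : Mor := ⟨∅, S, id⟩

def Mor.proj (F : Forest) (S : Finset ℕ) : Mor := ⟨S, (F.quot S).verts, id⟩

def Mor.zero (F : Forest) : Mor := ⟨F.verts, ∅, id⟩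

lemma isMor_incl {F : Forest} {S : Finset ℕ} (h : F.IsSub S) :
    IsMor (F.restrict S) F (Mor.incl S) :=
  ⟨isSub_empty _, h, (isoMap_quot_empty _).id_symm⟩

lemma isMor_proj {F : Forest} {S : Finset ℕ} (h : F.IsSub S) :
    IsMor F (F.quot S) (Mor.proj F S) :=
  ⟨h, isSub_verts _, isoMap_restrict_verts _⟩

lemma isMor_of_cut1_eq_verts {F G : Forest} {m : Mor} (h₁ : m.cut1 = F.verts)
    (h₂ : m.cut2 = ∅) : IsMor F G m :=
  ⟨h₁ ▸ isSub_verts F, h₂ ▸ isSub_empty G,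
    isoMap_of_verts_eq_empty _ (by simp [Forest.quot, h₁]) (by simp [Forest.restrict, h₂])⟩

lemma isMor_zero (F G : Forest) : IsMor F G (Mor.zero F) :=
  isMor_of_cut1_eq_verts rfl rfl

lemma IsMor.cut2_eq_image {F G : Forest} {m : Mor} (h : IsMor F G m) :
    m.cut2 = (F.quot m.cut1).verts.image m.map := by
  rw [h.2.2.image_verts]
  exact (Finset.inter_eq_left.2 h.2.1.1).symm

lemma MorEq.symm {F : Forest} {m n : Mor} (h : MorEq F m n) : MorEq F n m :=
  ⟨h.1.symm, h.2.1.symm, fun v hv => (h.2.2 v (h.1 ▸ hv)).symm⟩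

lemma MorEq.trans {F : Forest} {m n k : Mor} (h : MorEq F m n) (h' : MorEq F n k) :
    MorEq F m k :=
  ⟨h.1.trans h'.1, h.2.1.trans h'.2.1, fun v hv => (h.2.2 v hv).trans (h'.2.2 v (h.1 ▸ hv))⟩

lemma morEq_of_cut1_eq {F : Forest} {m n : Mor}
    (hm : m.cut2 = (F.quot m.cut1).verts.image m.map)
    (hn : n.cut2 = (F.quot n.cut1).verts.image n.map) (h₁ : m.cut1 = n.cut1)
    (hmap : Set.EqOn m.map n.map (F.quot m.cut1).verts) : MorEq F m n :=
  ⟨h₁, by rw [hm, hn, Finset.image_congr hmap, h₁], hmap⟩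

lemma morEq_zero_of_cut1_eq_verts {F : Forest} {m : Mor} (h₁ : m.cut1 = F.verts)
    (h₂ : m.cut2 = ∅) : MorEq F m (Mor.zero F) :=
  ⟨h₁, h₂, fun v hv => by simp [h₁] at hv⟩

lemma Mor.comp_cut2 (F : Forest) (m n : Mor) :
    (Mor.comp F m n).cut2 = (F.quot (Mor.comp F m n).cut1).verts.image (Mor.comp F m n).map :=
  rfl

lemma Mor.comp_cut2_eq_empty_iff {F : Forest} {m n : Mor} :
    (Mor.comp F m n).cut2 = ∅ ↔ ∀ v ∈ (F.quot m.cut1).verts, m.map v ∈ n.cut1 := by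
  rw [Mor.comp_cut2, Finset.image_eq_empty, Finset.eq_empty_iff_forall_notMem]
  simp only [Mor.comp, mem_quot_verts, Finset.mem_union, Finset.mem_filter]
  exact forall_congr' fun v => by tauto

lemma Mor.comp_cut1_eq_verts {F : Forest} {m n : Mor} (hm : m.cut1 ⊆ F.verts)
    (h : ∀ v ∈ (F.quot m.cut1).verts, m.map v ∈ n.cut1) : (Mor.comp F m n).cut1 = F.verts := by
  ext v
  simp only [Mor.comp, Finset.mem_union, Finset.mem_filter]
  refine ⟨by rintro (hv | ⟨hv, -⟩); exacts [hm hv, (mem_quot_verts.1 hv).1], fun hv => ?_⟩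
  by_cases hv' : v ∈ m.cut1
  · exact Or.inl hv'
  · exact Or.inr ⟨mem_quot_verts.2 ⟨hv, hv'⟩, h v (mem_quot_verts.2 ⟨hv, hv'⟩)⟩

lemma isZeroMor_comp {F G : Forest} {m n : Mor} (hm : m.cut1 ⊆ F.verts)
    (h : ∀ v ∈ (F.quot m.cut1).verts, m.map v ∈ n.cut1) : IsZeroMor F G (Mor.comp F m n) :=
  ⟨isMor_of_cut1_eq_verts (Mor.comp_cut1_eq_verts hm h) (Mor.comp_cut2_eq_empty_iff.2 h),
    Mor.comp_cut2_eq_empty_iff.2 h⟩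

lemma morEq_comp_zero {F : Forest} {m n : Mor} (hm : m.cut1 ⊆ F.verts)
    (h : ∀ v ∈ (F.quot m.cut1).verts, m.map v ∈ n.cut1) :
    MorEq F (Mor.comp F m n) (Mor.zero F) :=
  morEq_zero_of_cut1_eq_verts (Mor.comp_cut1_eq_verts hm h) (Mor.comp_cut2_eq_empty_iff.2 h)

lemma Mor.comp_incl_cut1 (F : Forest) (m : Mor) (S : Finset ℕ) :
    (Mor.comp F m (Mor.incl S)).cut1 = m.cut1 := by
  simp [Mor.comp, Mor.incl]

lemma morEq_comp_incl {F G : Forest} {m : Mor} (hm : IsMor F G m) (S : Finset ℕ) :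
    MorEq F (Mor.comp F m (Mor.incl S)) m :=
  morEq_of_cut1_eq (Mor.comp_cut2 F m _) hm.cut2_eq_image (Mor.comp_incl_cut1 F m S)
    fun _ _ => rfl

lemma Mor.comp_proj_cut1 {F : Forest} {S : Finset ℕ} {n : Mor}
    (hn : n.cut1 ⊆ (F.quot S).verts) : (Mor.comp F (Mor.proj F S) n).cut1 = S ∪ n.cut1 :=
  congrArg (S ∪ ·) (Finset.filter_mem_eq_inter.trans (Finset.inter_eq_right.2 hn))

lemma IsMor.map_mem {F G : Forest} {m : Mor} (h : IsMor F G m) {v : ℕ}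
    (hv : v ∈ (F.quot m.cut1).verts) : m.map v ∈ m.cut2 ∧ m.map v ∈ G.verts :=
  mem_restrict_verts.1 (h.2.2.1.mapsTo hv)

lemma IsMor.cut2_subset_of_comp_cut2_eq_empty {F G : Forest} {m n : Mor} (hm : IsMor F G m)
    (h : (Mor.comp F m n).cut2 = ∅) : m.cut2 ⊆ n.cut1 := by
  rw [hm.cut2_eq_image, Finset.image_subset_iff]
  exact Mor.comp_cut2_eq_empty_iff.1 h

lemma isZeroMor_incl_comp_proj (F : Forest) (S : Finset ℕ) :
    IsZeroMor (F.restrict S) (F.quot S) (Mor.comp (F.restrict S) (Mor.incl S) (Mor.proj F S)) :=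
  isZeroMor_comp (Finset.empty_subset _) fun _ hv =>
    (mem_restrict_verts.1 (mem_quot_verts.1 hv).1).1

/-- A morphism killed by the projection lands in `S` and factors through the inclusion as
the same datum. -/
lemma isKernelOf_incl_proj (F : Forest) (S : Finset ℕ) :
    IsKernelOf (F.restrict S) F (F.quot S) (Mor.incl S) (Mor.proj F S) := by
  refine ⟨isZeroMor_incl_comp_proj F S, fun A u hu hz => ?_⟩
  have hcut2 : u.cut2 ⊆ S := hu.cut2_subset_of_comp_cut2_eq_empty hz.2
  have hu' : IsMor A (F.restrict S) u :=
    ⟨hu.1, hu.2.1.restrict hcut2, hu.2.2.comp (isoMap_restrict_restrict F hcut2)⟩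
  exact ⟨u, hu', morEq_comp_incl hu' S,
    fun w hw hwu => hwu.symm.trans (morEq_comp_incl hw S)⟩

/-- A morphism killing `P_S(F)` cuts at least `S`, and factors through the projection by
cutting the rest. -/
lemma isCokernelOf_incl_proj {F : Forest} {S : Finset ℕ} (hS : F.IsSub S) :
    IsCokernelOf (F.restrict S) F (F.quot S) (Mor.incl S) (Mor.proj F S) := by
  refine ⟨isZeroMor_incl_comp_proj F S, fun B u hu hz => ?_⟩
  have hSu : S ⊆ u.cut1 := fun v hv =>
    Mor.comp_cut2_eq_empty_iff.1 hz.2 v (by simp [Mor.incl, hv, hS.1 hv])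
  have hquot : (F.quot u.cut1).verts = ((F.quot S).quot (u.cut1 \ S)).verts :=
    (isoMap_id_iff.1 (isoMap_quot_quot F hSu)).1.symm
  let w : Mor := ⟨u.cut1 \ S, u.cut2, u.map⟩
  have hw : IsMor (F.quot S) B w :=
    ⟨hu.1.quot, hu.2.1, (isoMap_quot_quot F hSu).comp hu.2.2⟩
  have hcomp : ∀ {w' : Mor}, IsMor (F.quot S) B w' →
      (Mor.comp F (Mor.proj F S) w').cut1 = S ∪ w'.cut1 := fun hw' =>
    Mor.comp_proj_cut1 hw'.1.1
  refine ⟨w, hw, ?_, fun w' hw' hwu => ?_⟩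
  · refine morEq_of_cut1_eq (Mor.comp_cut2 F _ _) hu.cut2_eq_image ?_ fun _ _ => rfl
    rw [hcomp hw]
    exact Finset.union_sdiff_of_subset hSu
  · have hdisj : Disjoint S w'.cut1 := by
      rw [Finset.disjoint_right]
      exact fun v hv => (mem_quot_verts.1 (hw'.1.1 hv)).2
    have hcut1 : w.cut1 = w'.cut1 := by
      change u.cut1 \ S = w'.cut1
      rw [← hwu.1, hcomp hw', Finset.union_sdiff_cancel_left hdisj]
    refine morEq_of_cut1_eq hw.cut2_eq_image hw'.cut2_eq_image hcut1 fun v hv => ?_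
    refine (hwu.2.2 v ?_).symm
    rw [hwu.1, hquot]
    exact hv

variable {A L B : Forest} {i p : Mor}

lemma IsKernelOf.morEq_of_comp_morEq_zero (hk : IsKernelOf A L B i p) {A' : Forest}
    {w₁ w₂ : Mor} (h₁ : IsMor A' A w₁) (h₂ : IsMor A' A w₂)
    (e₁ : MorEq A' (Mor.comp A' w₁ i) (Mor.zero A'))
    (e₂ : MorEq A' (Mor.comp A' w₂ i) (Mor.zero A')) : MorEq A' w₁ w₂ := by
  obtain ⟨w, -, -, hw⟩ := hk.2 A' (Mor.zero A') (isMor_zero A' L)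
    (isZeroMor_comp subset_rfl fun v hv => by simp [Mor.zero] at hv)
  exact (hw w₁ h₁ e₁).symm.trans (hw w₂ h₂ e₂)

lemma IsCokernelOf.morEq_of_comp_morEq_zero (hc : IsCokernelOf A L B i p) (hi : IsMor A L i)
    {B' : Forest} {w₁ w₂ : Mor} (h₁ : IsMor B B' w₁) (h₂ : IsMor B B' w₂)
    (e₁ : MorEq L (Mor.comp L p w₁) (Mor.zero L))
    (e₂ : MorEq L (Mor.comp L p w₂) (Mor.zero L)) : MorEq B w₁ w₂ := by
  obtain ⟨w, -, -, hw⟩ := hc.2 B' (Mor.zero L) (isMor_zero L B')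
    (isZeroMor_comp hi.1.1 fun _ hv => (hi.map_mem hv).2)
  exact (hw w₁ h₁ e₁).symm.trans (hw w₂ h₂ e₂)

/-- Kernels are monic: the inclusion of the severed part of `A` and the zero morphism agree
after composing with `i`. -/
lemma IsKernelOf.cut1_eq_empty (hk : IsKernelOf A L B i p) (hi : IsMor A L i) :
    i.cut1 = ∅ := by
  have e₁ : MorEq _ (Mor.comp _ (Mor.incl i.cut1) i) (Mor.zero (A.restrict i.cut1)) :=
    morEq_comp_zero (Finset.empty_subset _) fun _ hv =>
      (mem_restrict_verts.1 (mem_quot_verts.1 hv).1).1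
  have e₂ : MorEq _ (Mor.comp _ (Mor.zero (A.restrict i.cut1)) i)
      (Mor.zero (A.restrict i.cut1)) :=
    morEq_comp_zero subset_rfl fun _ hv => absurd (mem_quot_verts.1 hv).1 (mem_quot_verts.1 hv).2
  have h := (hk.morEq_of_comp_morEq_zero (isMor_incl hi.1) (isMor_zero _ _) e₁ e₂).1
  simpa [Mor.incl, Mor.zero, Forest.restrict, Finset.inter_eq_left.2 hi.1.1] using h.symm

/-- Every vertex severed by `p` lies in the image of `i`, since the inclusion of `P_{p.cut1}(L)`
factors through the kernel. -/
lemma IsKernelOf.cut1_subset_cut2 (hk : IsKernelOf A L B i p) (hi : IsMor A L i)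
    (hp : IsMor L B p) : p.cut1 ⊆ i.cut2 := by
  have hz : IsZeroMor (L.restrict p.cut1) B (Mor.comp _ (Mor.incl p.cut1) p) :=
    isZeroMor_comp (Finset.empty_subset _) fun _ hv =>
      (mem_restrict_verts.1 (mem_quot_verts.1 hv).1).1
  obtain ⟨w, hw, e, -⟩ := hk.2 _ _ (isMor_incl hp.1) hz
  have hw₁ : w.cut1 = ∅ := by
    have h : w.cut1 ⊆ (Mor.comp (L.restrict p.cut1) w i).cut1 := Finset.subset_union_left
    rw [e.1] at h
    exact Finset.subset_empty.1 h
  intro x hx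
  have hxP : x ∈ ((L.restrict p.cut1).quot w.cut1).verts := by simp [hw₁, hx, hp.1.1 hx]
  have hwx : w.map x ∈ (A.quot i.cut1).verts := by
    simp [hk.cut1_eq_empty hi, (mem_restrict_verts.1 (hw.2.2.1.mapsTo hxP)).2]
  have hix : i.map (w.map x) = x := e.2.2 x (by rw [e.1]; simp [Mor.incl, hx, hp.1.1 hx])
  exact hix ▸ (hi.map_mem hwx).1

/-- Cokernels are epic: the projection onto `R_{p.cut2}(B)` and the zero morphism agree after
composing with `p`. -/
lemma IsCokernelOf.cut2_eq_verts (hc : IsCokernelOf A L B i p) (hi : IsMor A L i)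
    (hp : IsMor L B p) : p.cut2 = B.verts :=
  (hc.morEq_of_comp_morEq_zero hi (isMor_proj hp.2.1) (isMor_zero B (B.quot p.cut2))
    (morEq_comp_zero hp.1.1 fun _ hv => (hp.map_mem hv).1)
    (morEq_comp_zero hp.1.1 fun _ hv => (hp.map_mem hv).2)).1

end Forest

open Forest in
/-- For every forest `F` and admissible cut (with severed part `S`),
the sequence `∅ → P_C(F) → F → R_C(F) → ∅` with maps `(C_null, C, id)` and
`(C, C_full, id)` is short exact; and every short exact sequence
`∅ → A → F → B → ∅` in `LRF` arises from such a one by composing with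
isomorphisms `A ≅ P_C(F)` and `R_C(F) ≅ B`. -/
theorem LRF_short_exact_sequences :
    (∀ (F : Forest) (S : Finset ℕ), F.IsSub S →
      IsShortExact (F.restrict S) F (F.quot S)
        (⟨∅, S, id⟩ : Mor) (⟨S, (F.quot S).verts, id⟩ : Mor)) ∧
    (∀ (A F B : Forest) (i p : Mor), IsShortExact A F B i p →
      ∃ S : Finset ℕ, F.IsSub S ∧
        i.cut1 = ∅ ∧ i.cut2 = S ∧ IsoMap A (F.restrict S) i.map ∧
        p.cut1 = S ∧ p.cut2 = B.verts ∧
        IsoMap (F.quot S) (B.restrict B.verts) p.map) := by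
  refine ⟨fun F S hS => ⟨isMor_incl hS, isMor_proj hS, isKernelOf_incl_proj F S,
    isCokernelOf_incl_proj hS⟩, fun A F B i p ⟨hi, hp, hk, hc⟩ => ?_⟩
  have hi₁ : i.cut1 = ∅ := hk.cut1_eq_empty hi
  have hp₁ : p.cut1 = i.cut2 :=
    (hk.cut1_subset_cut2 hi hp).antisymm (hi.cut2_subset_of_comp_cut2_eq_empty hk.1.2)
  have hp₂ : p.cut2 = B.verts := hc.cut2_eq_verts hi hp
  refine ⟨i.cut2, hi.2.1, hi₁, rfl, ?_, hp₁, hp₂, ?_⟩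
  · exact (isoMap_quot_empty A).comp (hi₁ ▸ hi.2.2)
  · exact hp₁ ▸ hp₂ ▸ hp.2.2
end

section
/- The coproduct Δ on the Ringel-Hall algebra H_LRF of labeled rooted forests, defined by Δ(f)(F, G) = f(F ⊕ G), is coassociative, cocommutative, and a homomorphism with respect to the convolution product, making H_LRF a cocommutative bialgebra (and, being graded connected, a Hopf algebra). -/
attribute [local instance] Classical.propDecidable

namespace Forest

/-- The empty forest (zero object of `LRF`). -/
def emptyForest : Forest :=
  ⟨∅, fun _ => none, by simp, ⟨id, by simp⟩⟩

/-- The direct sum (disjoint union) `F ⊕ G` of two forests, realized by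
relabeling `F` by even and `G` by odd natural numbers. -/
def oplus (F G : Forest) : Forest where
  verts := F.verts.image (fun v => 2 * v) ∪ G.verts.image (fun v => 2 * v + 1)
  parent v :=
    if v % 2 = 0 ∧ v / 2 ∈ F.verts then (F.parent (v / 2)).map (fun p => 2 * p)
    else if v % 2 = 1 ∧ v / 2 ∈ G.verts then (G.parent (v / 2)).map (fun p => 2 * p + 1)
    else none
  parent_mem := by
    intro v hv p hp
    beta_reduce at hp
    split at hp
    · rename_i hc
      obtain ⟨q, hq, rfl⟩ := Option.map_eq_some_iff.mp hp
      exact Finset.mem_union_left _ (Finset.mem_image_of_mem _ (F.parent_mem _ hc.2 _ hq))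
    · split at hp
      · rename_i hc
        obtain ⟨q, hq, rfl⟩ := Option.map_eq_some_iff.mp hp
        exact Finset.mem_union_right _ (Finset.mem_image_of_mem _ (G.parent_mem _ hc.2 _ hq))
      · simp at hp
  wf := by
    obtain ⟨dF, hdF⟩ := F.wf
    obtain ⟨dG, hdG⟩ := G.wf
    refine ⟨fun v => if v % 2 = 0 then dF (v / 2) else dG (v / 2), ?_⟩
    intro v hv p hp
    beta_reduce at hp
    split at hp
    · rename_i hc
      obtain ⟨q, hq, rfl⟩ := Option.map_eq_some_iff.mp hp
      have h1 : (2 * q) % 2 = 0 := by omega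
      have h2 : (2 * q) / 2 = q := by omega
      simp only [h1, h2, hc.1, if_true]
      exact hdF _ hc.2 _ hq
    · split at hp
      · rename_i hc
        obtain ⟨q, hq, rfl⟩ := Option.map_eq_some_iff.mp hp
        have h1 : (2 * q + 1) % 2 ≠ 0 := by omega
        have h2 : (2 * q + 1) / 2 = q := by omega
        have h3 : v % 2 ≠ 0 := by omega
        simp only [h2, if_neg h1, if_neg h3]
        exact hdG _ hc.2 _ hq
      · simp at hp

/-- The characteristic function of the empty forest: the unit of `H_LRF` and
(in the second argument) the counit. -/
noncomputable def unitF : Forest → ℚ := fun F => if F.verts = ∅ then 1 else 0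

/-- The characteristic function `δ_T` of the isomorphism class of `T`. -/
noncomputable def delta (T : Forest) : Forest → ℚ :=
  fun F => if Iso F T then 1 else 0

end Forest

namespace Forest

/-- The componentwise convolution product on functions of two forests
(the product of `H_LRF ⊗ H_LRF`). -/
noncomputable def conv2 (u w : Forest → Forest → ℚ) : Forest → Forest → ℚ :=
  fun A B =>
    ∑ S ∈ A.verts.powerset, ∑ T ∈ B.verts.powerset,
      if A.IsSub S ∧ B.IsSub T then
        u (A.restrict S) (B.restrict T) * w (A.quot S) (B.quot T)
      else 0

end Forest

/-! `F ⊕ G` stores the vertices of `F` at even and those of `G` at odd labels, so a subforest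
of `F ⊕ G` is exactly an interleaving of a subforest of `F` with one of `G`, and restriction and
quotient act on the two halves separately. Hence `Δ` is multiplicative on the nose, while
cocommutativity and coassociativity hold up to the relabelings that swap parities or
regroup labels modulo `4`, which invariant functions do not see. -/

namespace Forest

theorem ext {F G : Forest} (hverts : F.verts = G.verts) (hparent : F.parent = G.parent) :
    F = G := by
  cases F; cases G; cases hverts; cases hparent; rfl

theorem iso_of_invOn {F G : Forest} (φ ψ : ℕ → ℕ) (hφ : ∀ v ∈ F.verts, φ v ∈ G.verts)
    (hψ : ∀ w ∈ G.verts, ψ w ∈ F.verts) (hψφ : ∀ v ∈ F.verts, ψ (φ v) = v)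
    (hφψ : ∀ w ∈ G.verts, φ (ψ w) = w)
    (hparent : ∀ v ∈ F.verts, (F.parent v).map φ = G.parent (φ v)) : Iso F G :=
  ⟨φ, Set.InvOn.bijOn ⟨hψφ, hφψ⟩ hφ hψ, hparent⟩

def interleave (S T : Finset ℕ) : Finset ℕ :=
  S.image (fun v => 2 * v) ∪ T.image (fun v => 2 * v + 1)

section interleave

variable {S T : Finset ℕ}

@[simp]
theorem two_mul_mem_interleave {a : ℕ} : 2 * a ∈ interleave S T ↔ a ∈ S := by
  simp only [interleave, Finset.mem_union, Finset.mem_image]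
  constructor
  · rintro (⟨v, hv, hva⟩ | ⟨v, _, hva⟩)
    · rwa [show a = v by omega]
    · omega
  · exact fun ha => Or.inl ⟨a, ha, rfl⟩

@[simp]
theorem two_mul_add_one_mem_interleave {b : ℕ} : 2 * b + 1 ∈ interleave S T ↔ b ∈ T := by
  simp only [interleave, Finset.mem_union, Finset.mem_image]
  constructor
  · rintro (⟨v, _, hvb⟩ | ⟨v, hv, hvb⟩)
    · omega
    · rwa [show b = v by omega]
  · exact fun hb => Or.inr ⟨b, hb, rfl⟩

theorem interleave_eq_empty : interleave S T = ∅ ↔ S = ∅ ∧ T = ∅ := by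
  simp only [interleave, Finset.union_eq_empty, Finset.image_eq_empty]

theorem interleave_subset_interleave {S' T' : Finset ℕ} :
    interleave S T ⊆ interleave S' T' ↔ S ⊆ S' ∧ T ⊆ T' := by
  constructor
  · intro h
    exact ⟨fun a ha => two_mul_mem_interleave.mp (h (two_mul_mem_interleave.mpr ha)),
      fun b hb => two_mul_add_one_mem_interleave.mp (h (two_mul_add_one_mem_interleave.mpr hb))⟩
  · rintro ⟨hS, hT⟩ n hn
    obtain ⟨k, rfl | rfl⟩ := Nat.even_or_odd' n
    · simpa using hS (by simpa using hn)
    · simpa using hT (by simpa using hn)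

noncomputable def evenPart (U : Finset ℕ) : Finset ℕ :=
  U.preimage (2 * ·) (mul_right_injective₀ two_ne_zero).injOn

noncomputable def oddPart (U : Finset ℕ) : Finset ℕ :=
  U.preimage (2 * · + 1) ((add_left_injective 1).comp (mul_right_injective₀ two_ne_zero)).injOn

@[simp]
theorem mem_evenPart {U : Finset ℕ} {a : ℕ} : a ∈ evenPart U ↔ 2 * a ∈ U :=
  Finset.mem_preimage

@[simp]
theorem mem_oddPart {U : Finset ℕ} {b : ℕ} : b ∈ oddPart U ↔ 2 * b + 1 ∈ U :=
  Finset.mem_preimage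

theorem interleave_evenPart_oddPart (U : Finset ℕ) : interleave (evenPart U) (oddPart U) = U := by
  ext n
  obtain ⟨k, rfl | rfl⟩ := Nat.even_or_odd' n <;> simp

theorem sum_powerset_interleave {M : Type*} [AddCommMonoid M] (X Y : Finset ℕ)
    (h : Finset ℕ → M) :
    ∑ U ∈ (interleave X Y).powerset, h U =
      ∑ S ∈ X.powerset, ∑ T ∈ Y.powerset, h (interleave S T) := by
  rw [← Finset.sum_product']
  refine Finset.sum_nbij' (fun U => (evenPart U, oddPart U)) (fun p => interleave p.1 p.2)
    ?_ ?_ ?_ ?_ ?_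
  · intro U hU
    simpa [Finset.mem_product, ← interleave_subset_interleave, interleave_evenPart_oddPart]
      using hU
  · rintro ⟨S, T⟩ hST
    simpa [Finset.mem_product, interleave_subset_interleave] using hST
  · exact fun U _ => interleave_evenPart_oddPart U
  · rintro ⟨S, T⟩ -
    ext <;> simp
  · exact fun U _ => by rw [interleave_evenPart_oddPart]

end interleave

theorem oplus_verts (A B : Forest) : (oplus A B).verts = interleave A.verts B.verts := rfl

theorem oplus_parent_two_mul (A B : Forest) (a : ℕ) :
    (oplus A B).parent (2 * a) = if a ∈ A.verts then (A.parent a).map (2 * ·) else none := by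
  simp [oplus]

theorem oplus_parent_two_mul_add_one (A B : Forest) (b : ℕ) :
    (oplus A B).parent (2 * b + 1) =
      if b ∈ B.verts then (B.parent b).map (2 * · + 1) else none := by
  simp [oplus, show (2 * b + 1) / 2 = b by omega]

theorem restrict_verts (F : Forest) (S : Finset ℕ) : (F.restrict S).verts = S ∩ F.verts := rfl

theorem quot_verts (F : Forest) (S : Finset ℕ) : (F.quot S).verts = F.verts \ S := rfl

theorem restrict_oplus (A B : Forest) (S T : Finset ℕ) :
    (oplus A B).restrict (interleave S T) = oplus (A.restrict S) (B.restrict T) := by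
  refine ext ?_ (funext fun n => ?_)
  · ext n
    obtain ⟨k, rfl | rfl⟩ := Nat.even_or_odd' n <;> simp [restrict_verts, oplus_verts]
  · obtain ⟨k, rfl | rfl⟩ := Nat.even_or_odd' n
    · simp only [restrict, oplus_parent_two_mul, oplus_verts]
      cases A.parent k <;> split_ifs <;> simp_all
    · simp only [restrict, oplus_parent_two_mul_add_one, oplus_verts]
      cases B.parent k <;> split_ifs <;> simp_all

theorem quot_oplus (A B : Forest) (S T : Finset ℕ) :
    (oplus A B).quot (interleave S T) = oplus (A.quot S) (B.quot T) := by
  refine ext ?_ (funext fun n => ?_)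
  · ext n
    obtain ⟨k, rfl | rfl⟩ := Nat.even_or_odd' n <;> simp [quot_verts, oplus_verts]
  · obtain ⟨k, rfl | rfl⟩ := Nat.even_or_odd' n
    · simp only [quot, oplus_parent_two_mul, oplus_verts]
      cases A.parent k <;> split_ifs <;> simp_all
    · simp only [quot, oplus_parent_two_mul_add_one, oplus_verts]
      cases B.parent k <;> split_ifs <;> simp_all

theorem isSub_oplus (A B : Forest) (S T : Finset ℕ) :
    (oplus A B).IsSub (interleave S T) ↔ A.IsSub S ∧ B.IsSub T := by
  simp only [IsSub, oplus_verts, interleave_subset_interleave]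
  constructor
  · rintro ⟨⟨hS, hT⟩, hclosed⟩
    refine ⟨⟨hS, fun v hv w hw hwv => ?_⟩, ⟨hT, fun v hv w hw hwv => ?_⟩⟩
    · simpa using hclosed (2 * v) (by simpa) (2 * w) (by simpa)
        (by simp [oplus_parent_two_mul, hw, hwv])
    · simpa using hclosed (2 * v + 1) (by simpa) (2 * w + 1) (by simpa)
        (by simp [oplus_parent_two_mul_add_one, hw, hwv])
  · rintro ⟨⟨hS, hclosedS⟩, ⟨hT, hclosedT⟩⟩
    refine ⟨⟨hS, hT⟩, fun v hv w hw hwv => ?_⟩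
    obtain ⟨k, rfl | rfl⟩ := Nat.even_or_odd' w
    · simp only [oplus_parent_two_mul, two_mul_mem_interleave] at hw hwv
      simp only [hw, if_true, Option.map_eq_some_iff] at hwv
      obtain ⟨p, hkp, rfl⟩ := hwv
      simpa using hclosedS p (by simpa using hv) k hw hkp
    · simp only [oplus_parent_two_mul_add_one, two_mul_add_one_mem_interleave] at hw hwv
      simp only [hw, if_true, Option.map_eq_some_iff] at hwv
      obtain ⟨p, hkp, rfl⟩ := hwv
      simpa using hclosedT p (by simpa using hv) k hw hkp

theorem unitF_oplus (A B : Forest) : unitF (oplus A B) = unitF A * unitF B := by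
  simp only [unitF, oplus_verts, interleave_eq_empty, ite_zero_mul_ite_zero, mul_one]

theorem conv_oplus (f g : Forest → ℚ) (A B : Forest) :
    conv f g (oplus A B) =
      conv2 (fun A' B' => f (oplus A' B')) (fun A' B' => g (oplus A' B')) A B := by
  simp only [conv, conv2, oplus_verts, sum_powerset_interleave, isSub_oplus, restrict_oplus,
    quot_oplus]

def swapParity (n : ℕ) : ℕ := if n % 2 = 0 then n + 1 else n - 1

@[simp]
theorem swapParity_two_mul (a : ℕ) : swapParity (2 * a) = 2 * a + 1 := by
  simp [swapParity]

@[simp]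
theorem swapParity_two_mul_add_one (a : ℕ) : swapParity (2 * a + 1) = 2 * a := by
  simp [swapParity, Nat.add_mod]

theorem swapParity_swapParity (n : ℕ) : swapParity (swapParity n) = n := by
  obtain ⟨k, rfl | rfl⟩ := Nat.even_or_odd' n <;> simp

theorem iso_oplus_comm (A B : Forest) : Iso (oplus A B) (oplus B A) := by
  have hmaps : ∀ {A B : Forest}, ∀ v ∈ (oplus A B).verts, swapParity v ∈ (oplus B A).verts := by
    intro A B v hv
    obtain ⟨k, rfl | rfl⟩ := Nat.even_or_odd' v <;> simpa [oplus_verts] using hv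
  refine iso_of_invOn swapParity swapParity hmaps hmaps (fun v _ => swapParity_swapParity v)
    (fun v _ => swapParity_swapParity v) fun v hv => ?_
  obtain ⟨k, rfl | rfl⟩ := Nat.even_or_odd' v <;>
    simp_all [oplus_verts, oplus_parent_two_mul, oplus_parent_two_mul_add_one, Option.map_map,
      Function.comp_def]

/-- Carries `(A ⊕ B) ⊕ C` onto `A ⊕ (B ⊕ C)`: `4a ↦ 2a`, `4b + 2 ↦ 4b + 1`, `2c + 1 ↦ 4c + 3`. -/
def assocLabel (n : ℕ) : ℕ := if n % 2 = 1 then 2 * n + 1 else if n % 4 = 0 then n / 2 else n - 1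

def assocLabelInv (m : ℕ) : ℕ := if m % 2 = 0 then 2 * m else if m % 4 = 1 then m + 1 else m / 2

theorem assocLabelInv_assocLabel (n : ℕ) : assocLabelInv (assocLabel n) = n := by
  unfold assocLabel assocLabelInv
  split_ifs <;> omega

theorem assocLabel_assocLabelInv (m : ℕ) : assocLabel (assocLabelInv m) = m := by
  unfold assocLabel assocLabelInv
  split_ifs <;> omega

@[simp]
theorem assocLabel_four_mul (a : ℕ) : assocLabel (2 * (2 * a)) = 2 * a := by
  unfold assocLabel
  split_ifs <;> omega

@[simp]
theorem assocLabel_four_mul_add_two (b : ℕ) : assocLabel (2 * (2 * b + 1)) = 2 * (2 * b) + 1 := by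
  unfold assocLabel
  split_ifs <;> omega

@[simp]
theorem assocLabel_two_mul_add_one (c : ℕ) : assocLabel (2 * c + 1) = 2 * (2 * c + 1) + 1 := by
  unfold assocLabel
  split_ifs <;> omega

@[simp]
theorem assocLabelInv_two_mul (a : ℕ) : assocLabelInv (2 * a) = 2 * (2 * a) := by
  unfold assocLabelInv
  split_ifs <;> omega

@[simp]
theorem assocLabelInv_four_mul_add_one (b : ℕ) :
    assocLabelInv (2 * (2 * b) + 1) = 2 * (2 * b + 1) := by
  unfold assocLabelInv
  split_ifs <;> omega

@[simp]
theorem assocLabelInv_four_mul_add_three (c : ℕ) :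
    assocLabelInv (2 * (2 * c + 1) + 1) = 2 * c + 1 := by
  unfold assocLabelInv
  split_ifs <;> omega

theorem iso_oplus_assoc (A B C : Forest) :
    Iso (oplus (oplus A B) C) (oplus A (oplus B C)) := by
  refine iso_of_invOn assocLabel assocLabelInv (fun v hv => ?_) (fun w hw => ?_)
    (fun v _ => assocLabelInv_assocLabel v) (fun w _ => assocLabel_assocLabelInv w)
    (fun v hv => ?_)
  · obtain ⟨k, rfl | rfl⟩ := Nat.even_or_odd' v
    · obtain ⟨a, rfl | rfl⟩ := Nat.even_or_odd' k <;> simpa [oplus_verts] using hv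
    · simpa [oplus_verts] using hv
  · obtain ⟨k, rfl | rfl⟩ := Nat.even_or_odd' w
    · simpa [oplus_verts] using hw
    · obtain ⟨a, rfl | rfl⟩ := Nat.even_or_odd' k <;> simpa [oplus_verts] using hw
  · obtain ⟨k, rfl | rfl⟩ := Nat.even_or_odd' v
    · obtain ⟨a, rfl | rfl⟩ := Nat.even_or_odd' k <;>
        simp_all [oplus_verts, oplus_parent_two_mul, oplus_parent_two_mul_add_one,
          Option.map_map, Function.comp_def]
    · simp_all [oplus_verts, oplus_parent_two_mul_add_one, Option.map_map, Function.comp_def]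

end Forest

open Forest in
/-- The coproduct `Δ(f)(F, G) = f(F ⊕ G)` on `H_LRF` is
cocommutative and coassociative, is an algebra homomorphism for the convolution
product, and takes the unit to the unit ⊗ unit; hence `H_LRF` is a cocommutative
bialgebra (a graded connected one, so a Hopf algebra). -/
theorem hall_coproduct_bialgebra :
    (∀ f : Forest → ℚ, Invariant f → FinSupp f →
      ∀ A B, f (oplus A B) = f (oplus B A)) ∧
    (∀ f : Forest → ℚ, Invariant f → FinSupp f →
      ∀ A B C, f (oplus (oplus A B) C) = f (oplus A (oplus B C))) ∧
    (∀ f g : Forest → ℚ, Invariant f → FinSupp f → Invariant g → FinSupp g →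
      ∀ A B, conv f g (oplus A B) =
        conv2 (fun A' B' => f (oplus A' B')) (fun A' B' => g (oplus A' B')) A B) ∧
    (∀ A B, unitF (oplus A B) = unitF A * unitF B) :=
  ⟨fun f hf _ A B => hf _ _ (iso_oplus_comm A B),
    fun f hf _ A B C => hf _ _ (iso_oplus_assoc A B C),
    fun f g _ _ _ _ A B => conv_oplus f g A B,
    unitF_oplus⟩
end
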